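/- Let ℓ_1,…,ℓ_n ∈ ℝ and λ > 0. For the maximizer p* of Σ_i p_i ℓ_i − (λ/n) Σ_i (n p_i − 1)² over the probability simplex, there exists η ∈ ℝ such that p_i* = (1/(2λn)) · max(ℓ_i + 2λ − η, 0) for all i; consequently for any i, j with p_j* > 0, p_i*/p_j* = max(ℓ_i + 2λ − η, 0)/max(ℓ_j + 2λ − η, 0). -/
import Mathlib


open Finset

/-- thresholding (water-filling) form of the χ²-penalized worst-case
distribution over the simplex, and the resulting density ratios. -/
theorem stmt_5 (n : ℕ) (hn : 0 < n) (ℓ : Fin n → ℝ) (lam : ℝ) (hlam : 0 < lam)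
    (G : (Fin n → ℝ) → ℝ)
    (hG : ∀ p, G p = ∑ i, p i * ℓ i - (lam / n) * ∑ i, ((n : ℝ) * p i - 1) ^ 2)
    (pstar : Fin n → ℝ)
    (hmem : (∀ i, 0 ≤ pstar i) ∧ ∑ i, pstar i = 1)
    (hmax : ∀ p : Fin n → ℝ, (∀ i, 0 ≤ p i) → ∑ i, p i = 1 → G p ≤ G pstar) :
    ∃ η : ℝ,
      (∀ i, pstar i = (1 / (2 * lam * n)) * max (ℓ i + 2 * lam - η) 0) ∧
      (∀ i j, 0 < pstar j →
        pstar i / pstar j = max (ℓ i + 2 * lam - η) 0 / max (ℓ j + 2 * lam - η) 0) := by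
  obtain ⟨hpos, hsum⟩ := hmem
  have hn0 : (0:ℝ) < n := by exact_mod_cast hn
  have hn0' : (n:ℝ) ≠ 0 := ne_of_gt hn0
  set g : Fin n → ℝ := fun k => ℓ k + 2*lam - 2*lam*n*pstar k with hgdef
  -- rewrite G as a single sum
  have hG' : ∀ p : Fin n → ℝ,
      G p = ∑ k, (p k * ℓ k - (lam / n) * ((n : ℝ) * p k - 1) ^ 2) := by
    intro p
    rw [hG p, Finset.mul_sum, ← Finset.sum_sub_distrib]
  -- first-order exchange condition
  have key : ∀ i j, 0 < pstar j → g i ≤ g j := by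
    intro i j hj
    by_contra hlt
    push_neg at hlt
    have hij : i ≠ j := by rintro rfl; exact lt_irrefl _ hlt
    set d := g i - g j with hd
    have hd0 : 0 < d := sub_pos.2 hlt
    set t := min (pstar j) (d / (4*lam*n)) with ht
    have ht0 : 0 < t := lt_min hj (by positivity)
    have htj : t ≤ pstar j := min_le_left _ _
    have htd : 2*lam*n*t ≤ d/2 := by
      have h1 : t ≤ d/(4*lam*n) := min_le_right _ _
      have h2 : (0:ℝ) < 2*lam*n := by positivity
      calc 2*lam*n*t ≤ 2*lam*n*(d/(4*lam*n)) := by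
            exact mul_le_mul_of_nonneg_left h1 (le_of_lt h2)
        _ = d/2 := by field_simp; ring
    set q : Fin n → ℝ :=
      fun k => pstar k + (if k = i then t else 0) + (if k = j then -t else 0) with hq
    have hqi : q i = pstar i + t := by simp [hq, hij]
    have hqj : q j = pstar j - t := by simp [hq, hij.symm]; ring
    have hq_nonneg : ∀ k, 0 ≤ q k := by
      intro k
      by_cases hki : k = i
      · subst hki; rw [hqi]; have := hpos k; linarith
      · by_cases hkj : k = j
        · subst hkj; rw [hqj]; linarith
        · simp [hq, hki, hkj]; exact hpos k
    have hq_sum : ∑ k, q k = 1 := by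
      simp only [hq, Finset.sum_add_distrib, hsum, Finset.sum_ite_eq',
        Finset.mem_univ, if_true]
      ring
    -- compute the change in G
    set A : Fin n → ℝ := fun k =>
      (q k * ℓ k - (lam / n) * ((n : ℝ) * q k - 1) ^ 2)
      - (pstar k * ℓ k - (lam / n) * ((n : ℝ) * pstar k - 1) ^ 2) with hA
    have hAzero : ∀ k, k ≠ i → k ≠ j → A k = 0 := by
      intro k hki hkj
      simp [hA, hq, hki, hkj]
    have hdiff : G q - G pstar = A i + A j := by
      rw [hG' q, hG' pstar, ← Finset.sum_sub_distrib]
      rw [← Finset.sum_subset (Finset.subset_univ ({i, j} : Finset (Fin n)))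
        (by intro k _ hk
            simp only [Finset.mem_insert, Finset.mem_singleton, not_or] at hk
            exact hAzero k hk.1 hk.2)]
      rw [Finset.sum_pair hij]
    have hval : G q - G pstar = t * d - 2*lam*n*t^2 := by
      rw [hdiff]
      simp only [hA, hqi, hqj, hd, hgdef]
      field_simp
      ring
    have hcontra : G pstar < G q := by nlinarith
    exact absurd (hmax q hq_nonneg hq_sum) (not_le.2 hcontra)
  -- there is a positive coordinate
  have hex : ∃ j0, 0 < pstar j0 := by
    by_contra h
    push_neg at h
    have : ∀ j, pstar j = 0 := fun j => le_antisymm (h j) (hpos j)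
    rw [Finset.sum_congr rfl (fun j _ => this j)] at hsum
    simp at hsum
  obtain ⟨j0, hj0⟩ := hex
  refine ⟨g j0, ?_, ?_⟩
  · intro i
    rcases (hpos i).lt_or_eq with hpi | hpi
    · -- pstar i > 0 : g i = g j0
      have h1 : g i ≤ g j0 := key i j0 hj0
      have h2 : g j0 ≤ g i := key j0 i hpi
      have heq : g i = g j0 := le_antisymm h1 h2
      have hval : ℓ i + 2*lam - g j0 = 2*lam*n*pstar i := by
        rw [← heq]; simp [hgdef]
      have hvpos : 0 < ℓ i + 2*lam - g j0 := by
        rw [hval]; positivity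
      rw [max_eq_left (le_of_lt hvpos), hval]
      field_simp
    · -- pstar i = 0
      have h1 : g i ≤ g j0 := key i j0 hj0
      have hv : ℓ i + 2*lam - g j0 ≤ 0 := by
        have : g i = ℓ i + 2*lam := by simp [hgdef, ← hpi]
        linarith
      rw [max_eq_right hv, ← hpi, mul_zero]
  · intro i j hjpos
    have h1 : ∀ k, pstar k = (1 / (2 * lam * n)) * max (ℓ k + 2 * lam - g j0) 0 := by
      intro k
      rcases (hpos k).lt_or_eq with hpk | hpk
      · have heq : g k = g j0 := le_antisymm (key k j0 hj0) (key j0 k hpk)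
        have hval : ℓ k + 2*lam - g j0 = 2*lam*n*pstar k := by
          rw [← heq]; simp [hgdef]
        have hvpos : 0 < ℓ k + 2*lam - g j0 := by rw [hval]; positivity
        rw [max_eq_left (le_of_lt hvpos), hval]
        field_simp
      · have h1 : g k ≤ g j0 := key k j0 hj0
        have hv : ℓ k + 2*lam - g j0 ≤ 0 := by
          have : g k = ℓ k + 2*lam := by simp [hgdef, ← hpk]
          linarith
        rw [max_eq_right hv, ← hpk, mul_zero]
    rw [h1 i, h1 j]
    have hc : (1 / (2 * lam * n) : ℝ) ≠ 0 := by positivity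
    rw [mul_div_mul_left _ _ hc]
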